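/- Cycle-CTL* is strictly more expressive than CTL*: there is no CTL* state formula φ (a Cycle-CTL* formula containing no occurrence of E^cycle or A^cycle) such that for every Kripke structure K, K ⊨ φ if and only if K ⊨ E^cycle ⊤. -/

import Mathlib

namespace CycleCTL

universe u v

/-- A Kripke structure over a set `AP` of atomic propositions. -/
structure Kripke (AP : Type) : Type (u + 1) where
  World : Type u
  init : World
  R : World → World → Prop
  label : World → Set AP
  serial : ∀ w, ∃ v, R w v

variable {AP : Type}

/-- An (infinite) path of a Kripke structure. -/
def IsPath (K : Kripke.{u} AP) (π : ℕ → K.World) : Prop :=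
  ∀ i, K.R (π i) (π (i + 1))

/-- A cycle: a path visiting its first world infinitely often. -/
def IsCycle (K : Kripke.{u} AP) (π : ℕ → K.World) : Prop :=
  IsPath K π ∧ ∀ i, ∃ j, i < j ∧ π j = π 0

mutual
  /-- State formulas of Cycle-CTL*. -/
  inductive StateForm (AP : Type) : Type where
    | atom : AP → StateForm AP
    | not  : StateForm AP → StateForm AP
    | and  : StateForm AP → StateForm AP → StateForm AP
    | or   : StateForm AP → StateForm AP → StateForm AP
    | E    : PathForm AP → StateForm AP
    | A    : PathForm AP → StateForm AP
    | Ec   : PathForm AP → StateForm AP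
    | Ac   : PathForm AP → StateForm AP
  /-- Path formulas of Cycle-CTL*. -/
  inductive PathForm (AP : Type) : Type where
    | state : StateForm AP → PathForm AP
    | not   : PathForm AP → PathForm AP
    | and   : PathForm AP → PathForm AP → PathForm AP
    | or    : PathForm AP → PathForm AP → PathForm AP
    | next  : PathForm AP → PathForm AP
    | untl  : PathForm AP → PathForm AP → PathForm AP
end

mutual
  /-- Satisfaction of a state formula at a world. -/
  def SatS (K : Kripke.{u} AP) : K.World → StateForm AP → Prop
    | w, .atom p => p ∈ K.label w
    | w, .not φ => ¬ SatS K w φ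
    | w, .and φ₁ φ₂ => SatS K w φ₁ ∧ SatS K w φ₂
    | w, .or φ₁ φ₂ => SatS K w φ₁ ∨ SatS K w φ₂
    | w, .E ψ => ∃ π, IsPath K π ∧ π 0 = w ∧ SatP K π 0 ψ
    | w, .A ψ => ∀ π, IsPath K π → π 0 = w → SatP K π 0 ψ
    | w, .Ec ψ => ∃ π, IsCycle K π ∧ π 0 = w ∧ SatP K π 0 ψ
    | w, .Ac ψ => ∀ π, IsCycle K π → π 0 = w → SatP K π 0 ψ
  /-- Satisfaction of a path formula on a path at a position. -/
  def SatP (K : Kripke.{u} AP) : (ℕ → K.World) → ℕ → PathForm AP → Prop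
    | π, i, .state φ => SatS K (π i) φ
    | π, i, .not ψ => ¬ SatP K π i ψ
    | π, i, .and ψ₁ ψ₂ => SatP K π i ψ₁ ∧ SatP K π i ψ₂
    | π, i, .or ψ₁ ψ₂ => SatP K π i ψ₁ ∨ SatP K π i ψ₂
    | π, i, .next ψ => SatP K π (i + 1) ψ
    | π, i, .untl ψ₁ ψ₂ => ∃ k, SatP K π (i + k) ψ₂ ∧ ∀ j < k, SatP K π (i + j) ψ₁
end

/-- `K ⊨ φ` : satisfaction at the initial world. -/
def Sat (K : Kripke.{u} AP) (φ : StateForm AP) : Prop := SatS K K.init φ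

/-- `⊤` as a path formula, abbreviating `p ∨ ¬p`. -/
def topP (p : AP) : PathForm AP := .or (.state (.atom p)) (.not (.state (.atom p)))

/-- `F ψ` abbreviates `⊤ U ψ`. -/
def FP (p : AP) (ψ : PathForm AP) : PathForm AP := .untl (topP p) ψ

/-- `G ψ` abbreviates `¬(⊤ U ¬ψ)`. -/
def GP (p : AP) (ψ : PathForm AP) : PathForm AP := .not (FP p (.not ψ))


mutual
  /-- A CTL* state formula: no occurrence of the cycle quantifiers `E^cycle` / `A^cycle`. -/
  def NoCycS : StateForm AP → Prop
    | .atom _ => True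
    | .not φ => NoCycS φ
    | .and φ₁ φ₂ => NoCycS φ₁ ∧ NoCycS φ₂
    | .or φ₁ φ₂ => NoCycS φ₁ ∧ NoCycS φ₂
    | .E ψ => NoCycP ψ
    | .A ψ => NoCycP ψ
    | .Ec _ => False
    | .Ac _ => False
  /-- A CTL* path formula: no occurrence of the cycle quantifiers. -/
  def NoCycP : PathForm AP → Prop
    | .state φ => NoCycS φ
    | .not ψ => NoCycP ψ
    | .and ψ₁ ψ₂ => NoCycP ψ₁ ∧ NoCycP ψ₂
    | .or ψ₁ ψ₂ => NoCycP ψ₁ ∧ NoCycP ψ₂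
    | .next ψ => NoCycP ψ
    | .untl ψ₁ ψ₂ => NoCycP ψ₁ ∧ NoCycP ψ₂
end

/-!
CTL* formulas are invariant under bounded morphisms (p-morphisms): paths push forward along such a
map, and by the back condition every path of the target lifts to a path of the source. The successor
chain `0 → 1 → 2 → ⋯` maps onto the one-world self-loop by a bounded morphism, so no CTL* formula
tells them apart; yet the loop has a cycle at its initial world and the chain has no cycle at all.
-/

structure BoundedMorphism (K : Kripke.{u} AP) (K' : Kripke.{v} AP) where
  toFun : K.World → K'.World
  label_eq : ∀ w, K'.label (toFun w) = K.label w
  map_rel : ∀ {w v}, K.R w v → K'.R (toFun w) (toFun v)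
  lift_rel : ∀ {w v'}, K'.R (toFun w) v' → ∃ v, K.R w v ∧ toFun v = v'

namespace BoundedMorphism

variable {K : Kripke.{u} AP} {K' : Kripke.{v} AP}

instance : CoeFun (BoundedMorphism K K') (fun _ => K.World → K'.World) := ⟨toFun⟩

theorem isPath_comp (f : BoundedMorphism K K') {π : ℕ → K.World} (hπ : IsPath K π) :
    IsPath K' (f ∘ π) :=
  fun i => f.map_rel (hπ i)

theorem exists_isPath_comp_eq (f : BoundedMorphism K K') {π' : ℕ → K'.World}
    (hπ' : IsPath K' π') {w : K.World} (hw : f w = π' 0) :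
    ∃ π, IsPath K π ∧ π 0 = w ∧ f ∘ π = π' := by
  have step : ∀ n (v : {v // f v = π' n}), ∃ u : {u // f u = π' (n + 1)}, K.R v u := by
    rintro n ⟨v, hv⟩
    obtain ⟨u, hvu, hu⟩ := f.lift_rel (hv ▸ hπ' n)
    exact ⟨⟨u, hu⟩, hvu⟩
  choose next hnext using step
  let lift : (n : ℕ) → {v // f v = π' n} := fun n => Nat.rec ⟨w, hw⟩ next n
  exact ⟨fun n => (lift n).1, fun n => hnext n (lift n), rfl, funext fun n => (lift n).2⟩

mutual

theorem satS_iff (f : BoundedMorphism K K') (φ : StateForm AP) (hφ : NoCycS φ) (w : K.World) :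
    SatS K' (f w) φ ↔ SatS K w φ := by
  cases φ with
  | atom q => exact iff_of_eq (congrArg (q ∈ ·) (f.label_eq w))
  | not φ => exact not_congr (f.satS_iff φ hφ w)
  | and φ₁ φ₂ => exact and_congr (f.satS_iff φ₁ hφ.1 w) (f.satS_iff φ₂ hφ.2 w)
  | or φ₁ φ₂ => exact or_congr (f.satS_iff φ₁ hφ.1 w) (f.satS_iff φ₂ hφ.2 w)
  | E ψ =>
    constructor
    · rintro ⟨π', hπ', h0, hψ⟩
      obtain ⟨π, hπ, rfl, rfl⟩ := f.exists_isPath_comp_eq hπ' h0.symm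
      exact ⟨π, hπ, rfl, (f.satP_iff ψ hφ π 0).1 hψ⟩
    · rintro ⟨π, hπ, rfl, hψ⟩
      exact ⟨f ∘ π, f.isPath_comp hπ, rfl, (f.satP_iff ψ hφ π 0).2 hψ⟩
  | A ψ =>
    constructor
    · rintro hψ π hπ rfl
      exact (f.satP_iff ψ hφ π 0).1 (hψ _ (f.isPath_comp hπ) rfl)
    · rintro hψ π' hπ' h0
      obtain ⟨π, hπ, rfl, rfl⟩ := f.exists_isPath_comp_eq hπ' h0.symm
      exact (f.satP_iff ψ hφ π 0).2 (hψ π hπ rfl)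
  | Ec _ => exact hφ.elim
  | Ac _ => exact hφ.elim

theorem satP_iff (f : BoundedMorphism K K') (ψ : PathForm AP) (hψ : NoCycP ψ)
    (π : ℕ → K.World) (i : ℕ) : SatP K' (f ∘ π) i ψ ↔ SatP K π i ψ := by
  cases ψ with
  | state φ => exact f.satS_iff φ hψ (π i)
  | not ψ => exact not_congr (f.satP_iff ψ hψ π i)
  | and ψ₁ ψ₂ => exact and_congr (f.satP_iff ψ₁ hψ.1 π i) (f.satP_iff ψ₂ hψ.2 π i)
  | or ψ₁ ψ₂ => exact or_congr (f.satP_iff ψ₁ hψ.1 π i) (f.satP_iff ψ₂ hψ.2 π i)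
  | next ψ => exact f.satP_iff ψ hψ π (i + 1)
  | untl ψ₁ ψ₂ =>
    exact exists_congr fun k => and_congr (f.satP_iff ψ₂ hψ.2 π (i + k))
      (forall₂_congr fun j _ => f.satP_iff ψ₁ hψ.1 π (i + j))

end

end BoundedMorphism

theorem satS_Ec_topP_iff (K : Kripke.{u} AP) (p : AP) (w : K.World) :
    SatS K w (.Ec (topP p)) ↔ ∃ π, IsCycle K π ∧ π 0 = w :=
  exists_congr fun _ => and_congr_right fun _ => and_iff_left (em _)

namespace Kripke

def loop (AP : Type) : Kripke.{0} AP :=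
  ⟨Unit, (), fun _ _ => True, fun _ => ∅, fun _ => ⟨(), trivial⟩⟩

def succChain (AP : Type) : Kripke.{0} AP :=
  ⟨ℕ, 0, fun n m => m = n + 1, fun _ => ∅, fun n => ⟨n + 1, rfl⟩⟩

theorem isCycle_loop (π : ℕ → (loop AP).World) : IsCycle (loop AP) π :=
  ⟨fun _ => trivial, fun i => ⟨i + 1, i.lt_succ_self, rfl⟩⟩

theorem not_isCycle_succChain (π : ℕ → ℕ) : ¬ IsCycle (succChain AP) π := by
  rintro ⟨hπ, hret⟩
  have hπk : ∀ k, π k = π 0 + k := fun k => by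
    induction k with
    | zero => rfl
    | succ k ih => exact (hπ k).trans (congrArg (· + 1) ih)
  obtain ⟨j, hj, hj0 : π j = π 0⟩ := hret 0
  have := hπk j
  omega

def succChainToLoop (AP : Type) : BoundedMorphism (succChain AP) (loop AP) where
  toFun _ := ()
  label_eq _ := rfl
  map_rel _ := trivial
  lift_rel {n} _ _ := ⟨Nat.succ n, rfl, rfl⟩

end Kripke

/-- Cycle-CTL* is strictly more expressive than CTL*: no CTL* state formula
(one with no occurrence of `E^cycle` or `A^cycle`) is equivalent, over all Kripke structures,
to `E^cycle ⊤`. -/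
theorem stmt16 {AP : Type} (p : AP) :
    ¬ ∃ φ : StateForm AP, NoCycS φ ∧
        ∀ K : Kripke.{0} AP, (Sat K φ ↔ Sat K (.Ec (topP p))) := by
  rintro ⟨φ, hφ, hequiv⟩
  have hloop : Sat (Kripke.loop AP) (.Ec (topP p)) :=
    (satS_Ec_topP_iff _ p _).2 ⟨fun _ => (), Kripke.isCycle_loop _, rfl⟩
  have hchain : Sat (Kripke.succChain AP) φ :=
    ((Kripke.succChainToLoop AP).satS_iff φ hφ (0 : ℕ)).1 ((hequiv _).2 hloop)
  obtain ⟨π, hπ, -⟩ := (satS_Ec_topP_iff _ p _).1 ((hequiv _).1 hchain)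
  exact Kripke.not_isCycle_succChain π hπ

end CycleCTL
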